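/- arXiv:2509.23078 — 2 statements merged into one kernel-verified Lean document; each statement's English description precedes it below -/
import Mathlib

section
/- Existence of a degenerate partition: Let G be a finite simple graph, h : V(G) → {0,1}, and a, b : V(G) → ℤ≥0 with d_G(u) = a(u) + b(u) + h(u) and min{a(u), b(u)} ≥ 1 for every vertex u. If G has no (a,b)-feasible pair, then there exists a partition (X_1, X_2) of V(G) into non-empty sets such that: every non-empty subset X' ⊆ X_1 contains a vertex x with d_{X'}(x) ≤ a(x), and every non-empty subset X' ⊆ X_2 contains a vertex x with d_{X'}(x) ≤ b(x) + h(x) − 1. -/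
/-!
Take `X₂` maximal among the `(b + h)`-meager sets; it is non-empty because singletons are
meager. If some non-empty `X' ⊆ V ∖ X₂` had `d_{X'} > a` everywhere, pick `u ∈ X'`: by
maximality `X₂ + u` contains a non-empty `Y` with `d_Y ≥ b + h ≥ b` everywhere, and `u ∈ Y`
since `X₂` is meager. Then `(X' - u, Y)` is an `(a,b)`-feasible pair. If `X₂ = V`, split off a
single vertex instead.
-/

/-- `(A, B)` forms an `(a,b)`-feasible pair in `G`. -/
def FeasiblePair {V : Type*} [DecidableEq V] (G : SimpleGraph V) [DecidableRel G.Adj]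
    (a b : V → ℕ) : Prop :=
  ∃ A B : Finset V, A.Nonempty ∧ B.Nonempty ∧ Disjoint A B ∧
    (∀ u ∈ A, a u ≤ (A.filter (G.Adj u)).card) ∧
    (∀ v ∈ B, b v ≤ (B.filter (G.Adj v)).card)

open Finset

namespace SimpleGraph

variable {V : Type*} (G : SimpleGraph V) [DecidableRel G.Adj]

def IsDense (f : V → ℕ) (A : Finset V) : Prop :=
  ∀ u ∈ A, f u ≤ #(A.filter (G.Adj u))

/-- The paper's `1`-meager and `2`-meager sets are the `(a + 1)`-meager and the `(b + h)`-meager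
ones: the strict inequality avoids the truncated subtraction in `b + h - 1`. -/
def IsMeager (f : V → ℕ) (X : Finset V) : Prop :=
  ∀ X' ⊆ X, X'.Nonempty → ∃ x ∈ X', #(X'.filter (G.Adj x)) < f x

variable {G} {f : V → ℕ} {u : V} {A X Y : Finset V}

theorem IsMeager.mono (hY : G.IsMeager f Y) (hXY : X ⊆ Y) : G.IsMeager f X :=
  fun X' hX' => hY X' (hX'.trans hXY)

theorem IsMeager.not_isDense (hX : G.IsMeager f X) (hYX : Y ⊆ X) (hY : Y.Nonempty) :
    ¬ G.IsDense f Y := fun hdense =>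
  let ⟨x, hx, hlt⟩ := hX Y hYX hY
  (hdense x hx).not_gt hlt

theorem isMeager_singleton (hu : 0 < f u) : G.IsMeager f {u} := by
  intro X' hX' hne
  obtain rfl : X' = {u} := (subset_singleton_iff.mp hX').resolve_left hne.ne_empty
  exact ⟨u, mem_singleton_self u, by rwa [filter_singleton, if_neg (G.irrefl), card_empty]⟩

variable [DecidableEq V]

theorem IsDense.erase (hA : G.IsDense (fun v => f v + 1) A) (u : V) :
    G.IsDense f (A.erase u) := by
  intro x hx
  have hx' : f x + 1 ≤ _ := hA x (mem_of_mem_erase hx)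
  have : #(A.filter (G.Adj x)) - 1 ≤ #((A.filter (G.Adj x)).erase u) := pred_card_le_card_erase
  rw [filter_erase]
  omega

theorem IsDense.erase_nonempty (hA : G.IsDense (fun v => f v + 1) A) (hu : u ∈ A) :
    (A.erase u).Nonempty := by
  obtain ⟨w, hw⟩ := card_pos.mp ((Nat.succ_pos _).trans_le (hA u hu))
  rw [mem_filter] at hw
  exact ⟨w, mem_erase.mpr ⟨hw.2.ne', hw.1⟩⟩

theorem exists_isDense_of_maximal_isMeager (hX : Maximal (G.IsMeager f) X) (hu : u ∉ X) :
    ∃ Y ⊆ insert u X, u ∈ Y ∧ G.IsDense f Y := by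
  have hinsert : ¬ G.IsMeager f (insert u X) := fun h =>
    hu (hX.2 h (subset_insert u X) (mem_insert_self u X))
  simp only [IsMeager] at hinsert
  push Not at hinsert
  obtain ⟨Y, hYX, hY, hdense⟩ := hinsert
  refine ⟨Y, hYX, ?_, hdense⟩
  by_contra huY
  exact hX.1.not_isDense ((subset_insert_iff_of_notMem huY).mp hYX) hY hdense

variable [Fintype V]

theorem isMeager_compl_of_maximal {a b : V → ℕ} (hnf : ¬ FeasiblePair G a b)
    (hbf : ∀ v, b v ≤ f v) (hX : Maximal (G.IsMeager f) X) :
    G.IsMeager (fun v => a v + 1) Xᶜ := by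
  intro X' hX' hne
  by_contra! hdense
  replace hdense : G.IsDense (fun v => a v + 1) X' := hdense
  obtain ⟨u, hu⟩ := hne
  obtain ⟨Y, hYX, huY, hY⟩ := exists_isDense_of_maximal_isMeager hX (mem_compl.mp (hX' hu))
  refine hnf ⟨X'.erase u, Y, hdense.erase_nonempty hu, ⟨u, huY⟩, ?_, hdense.erase u,
    fun y hy => (hbf y).trans (hY y hy)⟩
  rw [Finset.disjoint_left]
  intro x hx hxY
  rcases mem_insert.mp (hYX hxY) with rfl | hxX
  · exact ne_of_mem_erase hx rfl
  · exact mem_compl.mp (hX' (mem_of_mem_erase hx)) hxX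

end SimpleGraph

open SimpleGraph

theorem exists_degenerate_partition_general {V : Type*} [Fintype V] [DecidableEq V] [Nonempty V]
    (G : SimpleGraph V) [DecidableRel G.Adj] (a b h : V → ℕ)
    (hdeg : ∀ u : V, G.degree u = a u + b u + h u)
    (hb : ∀ u, 1 ≤ b u)
    (hnf : ¬ FeasiblePair G a b) :
    ∃ X1 X2 : Finset V, X1.Nonempty ∧ X2.Nonempty ∧ Disjoint X1 X2 ∧
      X1 ∪ X2 = Finset.univ ∧
      (∀ X' ⊆ X1, X'.Nonempty → ∃ x ∈ X', (X'.filter (G.Adj x)).card ≤ a x) ∧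
      (∀ X' ⊆ X2, X'.Nonempty → ∃ x ∈ X', (X'.filter (G.Adj x)).card + 1 ≤ b x + h x) := by
  suffices ∃ X : Finset V, X.Nonempty ∧ Xᶜ.Nonempty ∧
      G.IsMeager (fun v => a v + 1) Xᶜ ∧ G.IsMeager (fun v => b v + h v) X by
    obtain ⟨X, hX, hXc, hmeager₁, hmeager₂⟩ := this
    refine ⟨Xᶜ, X, hXc, hX, disjoint_compl_left, by rw [union_comm, union_compl],
      fun X' hX' hne => ?_, hmeager₂⟩
    obtain ⟨x, hx, hlt⟩ := hmeager₁ X' hX' hne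
    exact ⟨x, hx, Nat.lt_succ_iff.mp hlt⟩
  have hbh : ∀ v, 0 < b v + h v := fun v => by have := hb v; omega
  obtain ⟨v⟩ := ‹Nonempty V›
  obtain ⟨X, hvX, hX⟩ :=
    Finite.exists_le_maximal (isMeager_singleton (G := G) (f := fun v => b v + h v) (hbh v))
  by_cases hXc : Xᶜ.Nonempty
  · exact ⟨X, ⟨v, singleton_subset_iff.mp hvX⟩, hXc,
      isMeager_compl_of_maximal hnf (fun v => Nat.le_add_right _ _) hX, hX.prop⟩
  obtain rfl : X = univ := (compl_eq_empty_iff X).mp (not_nonempty_iff_eq_empty.mp hXc)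
  obtain ⟨w, hvw⟩ := (G.degree_pos_iff_exists_adj v).mp (by rw [hdeg]; have := hb v; omega)
  exact ⟨{v}ᶜ, ⟨w, by simpa using hvw.ne'⟩, by simp,
    by rw [compl_compl]; exact isMeager_singleton (Nat.succ_pos _), hX.prop.mono (subset_univ _)⟩

/-- Existence of a degenerate partition (Claim 4). -/
theorem exists_degenerate_partition {V : Type*} [Fintype V] [DecidableEq V] [Nonempty V]
    (G : SimpleGraph V) [DecidableRel G.Adj] (a b h : V → ℕ)
    (hh : ∀ u, h u ≤ 1)
    (hdeg : ∀ u : V, G.degree u = a u + b u + h u)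
    (ha : ∀ u, 1 ≤ a u) (hb : ∀ u, 1 ≤ b u)
    (hnf : ¬ FeasiblePair G a b) :
    ∃ X1 X2 : Finset V, X1.Nonempty ∧ X2.Nonempty ∧ Disjoint X1 X2 ∧
      X1 ∪ X2 = Finset.univ ∧
      (∀ X' ⊆ X1, X'.Nonempty → ∃ x ∈ X', (X'.filter (G.Adj x)).card ≤ a x) ∧
      (∀ X' ⊆ X2, X'.Nonempty → ∃ x ∈ X', (X'.filter (G.Adj x)).card + 1 ≤ b x + h x) :=
  exists_degenerate_partition_general G a b h hdeg hb hnf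
end

section
/- Weight change under single vertex move: Let G be a finite simple graph with functions a, b : V(G) → ℤ≥0 and h : V(G) → {0,1} such that d_G(u) = a(u) + b(u) + h(u) for all u. Let (X_1, X_2) be a partition of V(G) and define the weight ω(X_1, X_2) = e(X_1) + e(X_2) + Σ_{u∈X_1} b(u) + Σ_{v∈X_2} a(v), where e(X) is the number of edges with both ends in X. If u ∈ X_1 satisfies d_{X_1}(u) ≤ a(u), then ω(X_1 \ {u}, X_2 ∪ {u}) − ω(X_1, X_2) ≥ h(u); and if v ∈ X_2 satisfies d_{X_2}(v) ≤ b(v) + h(v) − 1, then ω(X_1 ∪ {v}, X_2 \ {v}) − ω(X_1, X_2) ≥ 2 − h(v). -/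
open scoped Classical

/-- Number of edges of `G` with both endpoints in `X`. -/
noncomputable def edgesIn {V : Type*} [Fintype V] [DecidableEq V]
    (G : SimpleGraph V) [DecidableRel G.Adj] (X : Finset V) : ℕ :=
  (G.edgeFinset.filter (fun e => ∀ v ∈ e, v ∈ X)).card

/-- The weight `ω(X₁, X₂) = e(X₁) + e(X₂) + Σ_{u ∈ X₁} b(u) + Σ_{v ∈ X₂} a(v)`. -/
noncomputable def wt {V : Type*} [Fintype V] [DecidableEq V]
    (G : SimpleGraph V) [DecidableRel G.Adj] (a b : V → ℕ) (X1 X2 : Finset V) : ℕ :=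
  edgesIn G X1 + edgesIn G X2 + ∑ u ∈ X1, b u + ∑ v ∈ X2, a v

/-!
Moving `u` from `X₁` to `X₂` loses the `d_{X₁}(u)` edges from `u` into `X₁` and the term `b(u)`,
and gains `d_{X₂}(u) = d(u) - d_{X₁}(u)` edges and `a(u)`. With `d(u) = a(u) + b(u) + h(u)` the
net gain is `h(u) + 2 (a(u) - d_{X₁}(u))`. Moving `v` from `X₂` to `X₁` is the same computation
with the roles of the two parts (and of `a` and `b`) exchanged, and gains
`h(v) + 2 (b(v) - d_{X₂}(v))`.
-/

open Finset SimpleGraph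

section
variable {V : Type*} [Fintype V] [DecidableEq V] (G : SimpleGraph V) [DecidableRel G.Adj]

lemma edgesIn_eq_card_filter_sym2 (X : Finset V) :
    edgesIn G X = #{e ∈ X.sym2 | e ∈ G.edgeSet} := by
  unfold edgesIn
  congr 1
  ext e
  simp [mem_sym2_iff, and_comm]

lemma edgesIn_insert {u : V} {X : Finset V} (hu : u ∉ X) :
    edgesIn G (insert u X) = edgesIn G X + #(X.filter (G.Adj u)) := by
  rw [← cons_eq_insert u X hu, edgesIn_eq_card_filter_sym2, edgesIn_eq_card_filter_sym2,
    sym2_cons, filter_disjUnion, card_disjUnion, filter_map, card_map,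
    filter_cons_of_neg _ _ _ _ (by simp), add_comm]
  rfl

lemma edgesIn_erase {u : V} {X : Finset V} (hu : u ∈ X) :
    edgesIn G X = edgesIn G (X.erase u) + #(X.filter (G.Adj u)) := by
  conv_lhs => rw [← insert_erase hu]
  rw [edgesIn_insert G (notMem_erase u X), filter_erase,
    erase_eq_of_notMem fun h => G.irrefl (mem_filter.1 h).2]

lemma card_filter_adj_add_card_filter_adj {X1 X2 : Finset V} (hdisj : Disjoint X1 X2)
    (hun : X1 ∪ X2 = univ) (u : V) :
    #(X1.filter (G.Adj u)) + #(X2.filter (G.Adj u)) = G.degree u := by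
  rw [← card_union_of_disjoint (disjoint_filter_filter hdisj), ← filter_union, hun,
    ← card_neighborFinset_eq_degree, neighborFinset_eq_filter]

lemma wt_comm (a b : V → ℕ) (X1 X2 : Finset V) : wt G a b X1 X2 = wt G b a X2 X1 := by
  unfold wt
  ring

lemma wt_erase_insert (a b : V → ℕ) {X1 X2 : Finset V} {u : V} (hu1 : u ∈ X1) (hu2 : u ∉ X2) :
    wt G a b (X1.erase u) (insert u X2) + #(X1.filter (G.Adj u)) + b u
      = wt G a b X1 X2 + #(X2.filter (G.Adj u)) + a u := by
  unfold wt
  rw [edgesIn_erase G hu1, edgesIn_insert G hu2, ← sum_erase_add X1 b hu1, sum_insert hu2]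
  ring

lemma wt_insert_erase (a b : V → ℕ) {X1 X2 : Finset V} {v : V} (hv1 : v ∉ X1) (hv2 : v ∈ X2) :
    wt G a b (insert v X1) (X2.erase v) + #(X2.filter (G.Adj v)) + a v
      = wt G a b X1 X2 + #(X1.filter (G.Adj v)) + b v := by
  rw [wt_comm, wt_comm G a b X1]
  exact wt_erase_insert G b a hv2 hv1
end

/-- Weight change under a single vertex move. -/
theorem weight_change_single_move {V : Type*} [Fintype V] [DecidableEq V]
    (G : SimpleGraph V) [DecidableRel G.Adj] (a b h : V → ℕ)
    (hh : ∀ u, h u ≤ 1)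
    (hdeg : ∀ u : V, G.degree u = a u + b u + h u)
    (X1 X2 : Finset V) (hdisj : Disjoint X1 X2) (hun : X1 ∪ X2 = Finset.univ) :
    (∀ u ∈ X1, (X1.filter (G.Adj u)).card ≤ a u →
      wt G a b X1 X2 + h u ≤ wt G a b (X1.erase u) (insert u X2)) ∧
    (∀ v ∈ X2, (X2.filter (G.Adj v)).card + 1 ≤ b v + h v →
      wt G a b X1 X2 + (2 - h v) ≤ wt G a b (insert v X1) (X2.erase v)) := by
  constructor
  · intro u hu1 hlow
    have hmove := wt_erase_insert G a b hu1 (disjoint_left.1 hdisj hu1)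
    have hsplit := card_filter_adj_add_card_filter_adj G hdisj hun u
    have hdeg_u := hdeg u
    omega
  · intro v hv2 hlow
    have hmove := wt_insert_erase G a b (disjoint_right.1 hdisj hv2) hv2
    have hsplit := card_filter_adj_add_card_filter_adj G hdisj hun v
    have hdeg_v := hdeg v
    have hh_v := hh v
    omega
end
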